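/- Equal-α characterization, low range: if all players share a common parameter α with α < max{1, m} (where m is the number of non-players), then a graph is pairwise Nash stable if and only if it is the complete graph on V. -/
import Mathlib


open Finset

variable {V : Type*} [Fintype V] [DecidableEq V]

/-- The neighbourhood of `i` in the edge set `E`. -/
def nbhd (E : Finset (Sym2 V)) (i : V) : Finset V :=
  Finset.univ.filter fun j => j ≠ i ∧ s(i, j) ∈ E

/-- The degree of `v` in the edge set `E`. -/
def deg (E : Finset (Sym2 V)) (v : V) : ℕ :=
  (nbhd E v).card

/-- The utility of player `i` with visibility-aversion `α i` on edge set `E`: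
the sum of the degrees of `i`'s neighbours minus `α i` times `i`'s own degree. -/
noncomputable def util (α : V → ℝ) (E : Finset (Sym2 V)) (i : V) : ℝ :=
  (∑ j ∈ nbhd E i, (deg E j : ℝ)) - α i * (deg E i : ℝ)

/-- All unordered pairs of distinct vertices within `C`. -/
def cliqueOn (C : Finset V) : Finset (Sym2 V) :=
  ((C ×ˢ C).filter fun p => p.1 ≠ p.2).image fun p => s(p.1, p.2)

/-- A deviation of the edge set that the coalition `P` of players (among the player
set `N`) can achieve on its own: each added edge is either between two coalition
members (mutual consent), or unilaterally from a coalition member to a non-player,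
or between two non-player neighbours of a coalition member; each removed edge is
incident to a coalition member, or is an edge between two non-player neighbours of
a coalition member (a connection that the member sustained). -/
def CoalDev (N P : Finset V) (E E' : Finset (Sym2 V)) : Prop :=
  (∀ e ∈ E' \ E,
      (∃ i ∈ P, ∃ j ∈ P, i ≠ j ∧ e = s(i, j)) ∨
      (∃ i ∈ P, ∃ j, j ∉ N ∧ j ≠ i ∧ e = s(i, j)) ∨
      (∃ i ∈ P, ∃ j k : V, j ∉ N ∧ k ∉ N ∧ j ≠ k ∧
        s(i, j) ∈ E' ∧ s(i, k) ∈ E' ∧ e = s(j, k))) ∧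
  (∀ e ∈ E \ E',
      (∃ i ∈ P, i ∈ e) ∨
      (∃ i ∈ P, ∃ j k : V, j ∉ N ∧ k ∉ N ∧ j ≠ k ∧
        s(i, j) ∈ E ∧ s(i, k) ∈ E ∧ e = s(j, k)))

/-- Nash stability: no single player has a strictly profitable unilateral deviation. -/
def NashStable (N : Finset V) (α : V → ℝ) (E : Finset (Sym2 V)) : Prop :=
  ∀ i ∈ N, ∀ E' : Finset (Sym2 V), CoalDev N {i} E E' → util α E' i ≤ util α E i

/-- Pairwise stability: any two unconnected players such that connecting would strictly
benefit one must have the other strictly losing from the connection. -/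
def PairStable (N : Finset V) (α : V → ℝ) (E : Finset (Sym2 V)) : Prop :=
  ∀ i ∈ N, ∀ j ∈ N, i ≠ j → s(i, j) ∉ E →
    util α E i < util α (E ∪ {s(i, j)}) i → util α (E ∪ {s(i, j)}) j < util α E j

/-- Pairwise Nash stability. -/
def PANS (N : Finset V) (α : V → ℝ) (E : Finset (Sym2 V)) : Prop :=
  NashStable N α E ∧ PairStable N α E

/-- Strength: no coalition of players has a deviation making all its members weakly
better off and at least one strictly better off. -/
def Strong (N : Finset V) (α : V → ℝ) (E : Finset (Sym2 V)) : Prop :=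
  ∀ P ⊆ N, ∀ E' : Finset (Sym2 V), CoalDev N P E E' →
    ¬ ((∀ i ∈ P, util α E i ≤ util α E' i) ∧ ∃ i ∈ P, util α E i < util α E' i)

/-- Social welfare: the total utility of the players. -/
noncomputable def sw (N : Finset V) (α : V → ℝ) (E : Finset (Sym2 V)) : ℝ :=
  ∑ i ∈ N, util α E i

lemma mem_nbhd {E : Finset (Sym2 V)} {i j : V} : j ∈ nbhd E i ↔ j ≠ i ∧ s(i, j) ∈ E := by
  simp [nbhd]

lemma mem_cliqueOn {C : Finset V} {u v : V} :
    s(u, v) ∈ cliqueOn C ↔ u ∈ C ∧ v ∈ C ∧ u ≠ v := by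
  constructor
  · rintro h
    simp only [cliqueOn, mem_image, mem_filter, mem_product] at h
    obtain ⟨⟨x, y⟩, ⟨⟨hx, hy⟩, hxy⟩, he⟩ := h
    rw [Sym2.eq_iff] at he
    rcases he with ⟨rfl, rfl⟩ | ⟨rfl, rfl⟩
    · exact ⟨hx, hy, hxy⟩
    · exact ⟨hy, hx, (Ne.symm hxy)⟩
  · rintro ⟨hu, hv, huv⟩
    simp only [cliqueOn, mem_image, mem_filter, mem_product]
    exact ⟨(u, v), ⟨⟨hu, hv⟩, huv⟩, rfl⟩

lemma nbhd_mono {E E' : Finset (Sym2 V)} (h : E ⊆ E') (i : V) : nbhd E i ⊆ nbhd E' i := by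
  intro j hj
  rw [mem_nbhd] at hj ⊢
  exact ⟨hj.1, h hj.2⟩

lemma deg_mono {E E' : Finset (Sym2 V)} (h : E ⊆ E') (i : V) : deg E i ≤ deg E' i :=
  card_le_card (nbhd_mono h i)

lemma nbhd_subset (E : Finset (Sym2 V)) (i : V) : nbhd E i ⊆ univ.erase i := by
  intro j hj
  rw [mem_nbhd] at hj
  exact mem_erase.2 ⟨hj.1, mem_univ j⟩

lemma deg_le (E : Finset (Sym2 V)) (i : V) : deg E i ≤ Fintype.card V - 1 := by
  have := card_le_card (nbhd_subset E i)
  rwa [card_erase_of_mem (mem_univ i), card_univ] at this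

lemma nbhd_union_edge_self {E : Finset (Sym2 V)} {i j : V} (hij : i ≠ j) :
    nbhd (E ∪ {s(i, j)}) i = insert j (nbhd E i) := by
  ext k
  simp only [mem_nbhd, mem_union, mem_singleton, mem_insert, Sym2.congr_right]
  constructor
  · rintro ⟨hk, hE | rfl⟩
    · exact Or.inr ⟨hk, hE⟩
    · exact Or.inl rfl
  · rintro (rfl | ⟨hk, hE⟩)
    · exact ⟨hij.symm, Or.inr rfl⟩
    · exact ⟨hk, Or.inl hE⟩

lemma nbhd_union_edge_other {E : Finset (Sym2 V)} {i j : V} (hij : i ≠ j) :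
    nbhd (E ∪ {s(i, j)}) j = insert i (nbhd E j) := by
  have : s(i, j) = s(j, i) := Sym2.eq_swap
  rw [this, nbhd_union_edge_self hij.symm]

lemma nbhd_union_edge_notmem {E : Finset (Sym2 V)} {i j k : V} (hki : k ≠ i) (hkj : k ≠ j) :
    nbhd (E ∪ {s(i, j)}) k = nbhd E k := by
  ext l
  simp only [mem_nbhd, mem_union, mem_singleton]
  constructor
  · rintro ⟨hl, hE | he⟩
    · exact ⟨hl, hE⟩
    · rw [Sym2.eq_iff] at he
      rcases he with ⟨rfl, rfl⟩ | ⟨rfl, rfl⟩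
      · exact absurd rfl hki
      · exact absurd rfl hkj
  · rintro ⟨hl, hE⟩
    exact ⟨hl, Or.inl hE⟩

lemma util_add_edge (α : V → ℝ) {E : Finset (Sym2 V)} {i j : V} (hij : i ≠ j)
    (hE : s(i, j) ∉ E) :
    util α (E ∪ {s(i, j)}) i = util α E i + ((deg E j : ℝ) + 1 - α i) := by
  have hjn : j ∉ nbhd E i := by
    rw [mem_nbhd]; rintro ⟨-, h⟩; exact hE h
  have hin : i ∉ nbhd E j := by
    rw [mem_nbhd]; rintro ⟨-, h⟩; rw [Sym2.eq_swap] at h; exact hE h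
  have hdegj : deg (E ∪ {s(i, j)}) j = deg E j + 1 := by
    rw [deg, nbhd_union_edge_other hij, card_insert_of_notMem hin, deg]
  have hdegi : deg (E ∪ {s(i, j)}) i = deg E i + 1 := by
    rw [deg, nbhd_union_edge_self hij, card_insert_of_notMem hjn, deg]
  have hsum : ∀ k ∈ nbhd E i, deg (E ∪ {s(i, j)}) k = deg E k := by
    intro k hk
    rw [mem_nbhd] at hk
    have hki : k ≠ i := hk.1
    have hkj : k ≠ j := by rintro rfl; exact hjn (mem_nbhd.2 hk)
    rw [deg, nbhd_union_edge_notmem hki hkj, deg]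
  rw [util, util, nbhd_union_edge_self hij, sum_insert hjn, hdegj, hdegi,
    sum_congr rfl (fun k hk => by rw [hsum k hk])]
  push_cast
  ring


lemma util_lt_interconnect (α : V → ℝ) {E : Finset (Sym2 V)} {i j k : V}
    (hj : j ∈ nbhd E i) (hk : k ∈ nbhd E i) (hjk : j ≠ k) (hE : s(j, k) ∉ E) :
    util α E i < util α (E ∪ {s(j, k)}) i := by
  have hji : j ≠ i := (mem_nbhd.1 hj).1
  have hki : k ≠ i := (mem_nbhd.1 hk).1
  have hnb : nbhd (E ∪ {s(j, k)}) i = nbhd E i := nbhd_union_edge_notmem hji.symm hki.symm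
  have hdegi : deg (E ∪ {s(j, k)}) i = deg E i := by rw [deg, hnb, deg]
  have hkn : k ∉ nbhd E j := by
    rw [mem_nbhd]; rintro ⟨-, h⟩; exact hE h
  have hdegj : deg E j < deg (E ∪ {s(j, k)}) j := by
    rw [deg, deg, nbhd_union_edge_self hjk, card_insert_of_notMem hkn]
    omega
  rw [util, util, hnb, hdegi]
  have hsum : ∑ l ∈ nbhd E i, (deg E l : ℝ) < ∑ l ∈ nbhd E i, (deg (E ∪ {s(j, k)}) l : ℝ) := by
    apply Finset.sum_lt_sum
    · exact fun l _ => Nat.cast_le.2 (deg_mono subset_union_left l)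
    · exact ⟨j, hj, Nat.cast_lt.2 hdegj⟩
  linarith

lemma player_nonplayer_edge {N : Finset V} {a : ℝ}
    (ham : a < (((univ \ N) : Finset V).card : ℝ))
    {E : Finset (Sym2 V)} (hst : NashStable N (fun _ => a) E)
    {i j : V} (hi : i ∈ N) (hj : j ∉ N) : s(i, j) ∈ E := by
  by_contra hE
  set O : Finset V := univ \ N with hO
  set E' : Finset (Sym2 V) := E ∪ cliqueOn (insert i O) with hE'
  have hiO : i ∉ O := by simp [hO, hi]
  have hmemO : ∀ x, x ∈ O ↔ x ∉ N := by intro x; simp [hO]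
  -- membership in the clique part
  have hclq : ∀ u v : V, u ∈ insert i O → v ∈ insert i O → u ≠ v → s(u, v) ∈ E' := by
    intro u v hu hv huv
    exact mem_union_right _ (mem_cliqueOn.2 ⟨hu, hv, huv⟩)
  have hdev : CoalDev N {i} E E' := by
    constructor
    · intro e he
      rw [mem_sdiff] at he
      obtain ⟨he1, he2⟩ := he
      have he3 : e ∈ cliqueOn (insert i O) := by
        rcases mem_union.1 he1 with h | h
        · exact absurd h he2
        · exact h
      induction e using Sym2.ind with
      | _ u v =>
        obtain ⟨hu, hv, huv⟩ := mem_cliqueOn.1 he3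
        rcases mem_insert.1 hu with rfl | hu'
        · right; left
          refine ⟨u, mem_singleton_self u, v, ?_, huv.symm, rfl⟩
          exact (hmemO v).1 (mem_insert.1 hv |>.resolve_left (Ne.symm huv))
        · rcases mem_insert.1 hv with rfl | hv'
          · right; left
            exact ⟨v, mem_singleton_self v, u, (hmemO u).1 hu', huv, Sym2.eq_swap⟩
          · right; right
            refine ⟨i, mem_singleton_self i, u, v, (hmemO u).1 hu', (hmemO v).1 hv', huv,
              hclq i u (mem_insert_self i O) hu ?_, hclq i v (mem_insert_self i O) hv ?_, rfl⟩
            · rintro rfl; exact hiO hu'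
            · rintro rfl; exact hiO hv'
    · intro e he
      rw [mem_sdiff] at he
      exact absurd (mem_union_left _ he.1) he.2
  set S : Finset V := nbhd E i with hS
  set T : Finset V := O \ S with hT
  have hjT : j ∈ T := by
    rw [hT, mem_sdiff]
    refine ⟨(hmemO j).2 hj, ?_⟩
    rw [hS, mem_nbhd]; rintro ⟨-, h⟩; exact hE h
  have hTne : 1 ≤ T.card := card_pos.2 ⟨j, hjT⟩
  have hnb' : nbhd E' i = S ∪ T := by
    rw [hT, union_sdiff_self_eq_union]
    ext k
    constructor
    · intro hkk
      obtain ⟨hk, h⟩ := mem_nbhd.1 hkk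
      rcases mem_union.1 h with h | h
      · exact mem_union_left _ (mem_nbhd.2 ⟨hk, h⟩)
      · obtain ⟨-, hkm, -⟩ := mem_cliqueOn.1 h
        exact mem_union_right _ (mem_insert.1 hkm |>.resolve_left hk)
    · intro hkk
      rcases mem_union.1 hkk with h | h
      · obtain ⟨hk, hEk⟩ := mem_nbhd.1 h
        exact mem_nbhd.2 ⟨hk, mem_union_left _ hEk⟩
      · have hkN := (hmemO k).1 h
        have hki : k ≠ i := by rintro rfl; exact hkN hi
        exact mem_nbhd.2 ⟨hki, hclq i k (mem_insert_self i O) (mem_insert_of_mem h) hki.symm⟩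
  have hdisj : Disjoint S T := disjoint_sdiff
  have hdegT : ∀ k ∈ T, (O.card : ℝ) ≤ (deg E' k : ℝ) := by
    intro k hk
    have hkO : k ∈ O := (mem_sdiff.1 hk).1
    have hkN : k ∉ N := (hmemO k).1 hkO
    have hki : k ≠ i := by rintro rfl; exact hkN hi
    have hsub : insert i (O.erase k) ⊆ nbhd E' k := by
      intro l hl
      rcases mem_insert.1 hl with rfl | hl'
      · exact mem_nbhd.2 ⟨hki.symm, hclq k l (mem_insert_of_mem hkO) (mem_insert_self l O) hki⟩
      · obtain ⟨hlk, hlO⟩ := mem_erase.1 hl'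
        exact mem_nbhd.2 ⟨hlk, hclq k l (mem_insert_of_mem hkO) (mem_insert_of_mem hlO) (Ne.symm hlk)⟩
    have hcard : O.card ≤ deg E' k := by
      have h1 : (insert i (O.erase k)).card ≤ deg E' k := card_le_card hsub
      have hnotin : i ∉ O.erase k := fun h => hiO (mem_of_mem_erase h)
      have h2 : (insert i (O.erase k)).card = (O.erase k).card + 1 :=
        card_insert_of_notMem hnotin
      have h3 : (O.erase k).card = O.card - 1 := card_erase_of_mem hkO
      have h4 : 1 ≤ O.card := card_pos.2 ⟨k, hkO⟩
      omega
    exact_mod_cast hcard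
  have hdegS : ∀ k ∈ S, (deg E k : ℝ) ≤ (deg E' k : ℝ) :=
    fun k _ => Nat.cast_le.2 (deg_mono subset_union_left k)
  have hdegi' : (deg E' i : ℝ) = S.card + T.card := by
    rw [deg, hnb', card_union_of_disjoint hdisj]
    push_cast; ring
  have key : util (fun _ => a) E i < util (fun _ => a) E' i := by
    rw [util, util, hnb', sum_union hdisj, hdegi']
    have h1 : ∑ k ∈ S, (deg E k : ℝ) ≤ ∑ k ∈ S, (deg E' k : ℝ) := sum_le_sum hdegS
    have h2 : (T.card : ℝ) * O.card ≤ ∑ k ∈ T, (deg E' k : ℝ) := by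
      calc (T.card : ℝ) * O.card = ∑ _k ∈ T, (O.card : ℝ) := by rw [sum_const, nsmul_eq_mul]
      _ ≤ _ := sum_le_sum hdegT
    have h3 : (1 : ℝ) ≤ T.card := by exact_mod_cast hTne
    have hdegSi : (deg E i : ℝ) = S.card := by rw [hS, deg]
    rw [hdegSi]
    nlinarith [mul_le_mul_of_nonneg_left (le_of_lt ham) (le_trans zero_le_one h3)]
  exact absurd (hst i hi E' hdev) (not_le.2 key)

lemma nbhd_complete (i : V) : nbhd (cliqueOn (univ : Finset V)) i = univ.erase i := by
  ext j
  simp only [mem_nbhd, mem_cliqueOn, mem_erase, mem_univ, true_and, and_true]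
  constructor
  · rintro ⟨h, -⟩; exact h
  · intro h; exact ⟨h, h.symm⟩

lemma deg_complete (i : V) : deg (cliqueOn (univ : Finset V)) i = Fintype.card V - 1 := by
  rw [deg, nbhd_complete, card_erase_of_mem (mem_univ i), card_univ]


/-- Equal-`α` characterization, low range: when the common `α` is below `max 1 m`
(with `m` the number of non-players), a graph is pairwise Nash stable iff it is the
complete graph on `V`. -/
theorem equal_alpha_low_characterization (N : Finset V) (hN : 2 ≤ N.card)
    (a : ℝ) (ha0 : 0 ≤ a)
    (ha : a < max 1 ((Fintype.card V - N.card : ℕ) : ℝ)) :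
    ∀ E ⊆ cliqueOn (Finset.univ : Finset V),
      (PANS N (fun _ => a) E ↔ E = cliqueOn (Finset.univ : Finset V)) := by
  intro E hEsub
  have hcard2 : 2 ≤ Fintype.card V := le_trans hN (card_le_univ N)
  have hm : ((univ \ N : Finset V)).card = Fintype.card V - N.card := by
    rw [card_sdiff_of_subset (subset_univ N), card_univ]
  set m : ℕ := Fintype.card V - N.card with hmdef
  -- a ≤ card V - 1
  have had : a ≤ ((Fintype.card V - 1 : ℕ) : ℝ) := by
    refine le_of_lt (lt_of_lt_of_le ha (max_le ?_ ?_))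
    · exact_mod_cast Nat.one_le_iff_ne_zero.2 (by omega)
    · exact_mod_cast (by omega : m ≤ Fintype.card V - 1)
  constructor
  · rintro ⟨hNash, hPair⟩
    -- claim PO: every player-nonplayer edge is present
    have hPO : ∀ i ∈ N, ∀ j, j ∉ N → s(i, j) ∈ E := by
      intro i hi j hj
      have hjO : j ∈ (univ \ N : Finset V) := mem_sdiff.2 ⟨mem_univ j, hj⟩
      have h1 : 1 ≤ ((univ \ N : Finset V)).card := card_pos.2 ⟨j, hjO⟩
      have ham : a < (((univ \ N : Finset V)).card : ℝ) := by
        rw [hm]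
        calc a < max 1 (m : ℝ) := ha
        _ = (m : ℝ) := max_eq_right (by exact_mod_cast (by omega : 1 ≤ m))
      exact player_nonplayer_edge ham hNash hi hj
    -- claim complete
    have hcomp : ∀ u v : V, u ≠ v → s(u, v) ∈ E := by
      intro u v huv
      by_cases hu : u ∈ N <;> by_cases hv : v ∈ N
      · -- both players
        by_contra hE
        have hdegpos : ∀ p ∈ N, a < (deg E p : ℝ) + 1 := by
          intro p hp
          rcases lt_max_iff.1 ha with h | h
          · have : (0 : ℝ) ≤ (deg E p : ℝ) := Nat.cast_nonneg _
            linarith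
          · have hOsub : (univ \ N : Finset V) ⊆ nbhd E p := by
              intro k hk
              obtain ⟨-, hkN⟩ := mem_sdiff.1 hk
              have hkp : k ≠ p := by rintro rfl; exact hkN hp
              exact mem_nbhd.2 ⟨hkp, hPO p hp k hkN⟩
            have : ((univ \ N : Finset V)).card ≤ deg E p := card_le_card hOsub
            rw [hm] at this
            have : (m : ℝ) ≤ (deg E p : ℝ) := by exact_mod_cast this
            linarith
        have hgain_u : util (fun _ => a) E u < util (fun _ => a) (E ∪ {s(u, v)}) u := by
          rw [util_add_edge (fun _ => a) huv hE]
          have := hdegpos v hv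
          linarith
        have hloss := hPair u hu v hv huv hE hgain_u
        have hvuE : s(v, u) ∉ E := by rw [Sym2.eq_swap]; exact hE
        have heq : E ∪ {s(u, v)} = E ∪ {s(v, u)} := by rw [Sym2.eq_swap]
        rw [heq, util_add_edge (fun _ => a) huv.symm hvuE] at hloss
        have := hdegpos u hu
        linarith
      · exact hPO u hu v hv
      · rw [Sym2.eq_swap]; exact hPO v hv u hu
      · -- both non-players: interconnect deviation
        by_contra hE
        obtain ⟨i, hi⟩ := card_pos.1 (by omega : 0 < N.card)
        have hiu : i ≠ u := by rintro rfl; exact hu hi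
        have hiv : i ≠ v := by rintro rfl; exact hv hi
        have hju : u ∈ nbhd E i := mem_nbhd.2 ⟨hiu.symm, hPO i hi u hu⟩
        have hjv : v ∈ nbhd E i := mem_nbhd.2 ⟨hiv.symm, hPO i hi v hv⟩
        set E' : Finset (Sym2 V) := E ∪ {s(u, v)} with hE'
        have hdev : CoalDev N {i} E E' := by
          constructor
          · intro e he
            rw [mem_sdiff] at he
            have : e = s(u, v) := by
              rcases mem_union.1 he.1 with h | h
              · exact absurd h he.2
              · exact mem_singleton.1 h
            right; right
            exact ⟨i, mem_singleton_self i, u, v, hu, hv, huv,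
              mem_union_left _ (hPO i hi u hu), mem_union_left _ (hPO i hi v hv), this⟩
          · intro e he
            rw [mem_sdiff] at he
            exact absurd (mem_union_left _ he.1) he.2
        have key := util_lt_interconnect (fun _ => a) hju hjv huv hE
        exact absurd (hNash i hi E' hdev) (not_le.2 key)
    apply Finset.Subset.antisymm hEsub
    intro e he
    induction e using Sym2.ind with
    | _ u v => exact hcomp u v (mem_cliqueOn.1 he).2.2
  · rintro rfl
    set d : ℝ := ((Fintype.card V - 1 : ℕ) : ℝ) with hd
    have hd0 : 0 ≤ d - a := by rw [hd]; linarith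
    have hutil_complete : ∀ i : V, util (fun _ => a) (cliqueOn (univ : Finset V)) i = d * (d - a) := by
      intro i
      rw [util, nbhd_complete]
      have h1 : ∀ j ∈ univ.erase i, ((deg (cliqueOn (univ : Finset V)) j : ℝ)) = d := by
        intro j _; rw [deg_complete]
      rw [sum_congr rfl h1, sum_const, card_erase_of_mem (mem_univ i), card_univ,
        deg_complete, nsmul_eq_mul]
      rw [hd]; ring
    have hbound : ∀ (E' : Finset (Sym2 V)) (i : V), util (fun _ => a) E' i ≤ d * (d - a) := by
      intro E' i
      have hdb : ∀ j, ((deg E' j : ℝ)) ≤ d := fun j => Nat.cast_le.2 (deg_le E' j)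
      have hcb : ((nbhd E' i).card : ℝ) ≤ d := by
        have h := deg_le E' i
        rw [deg] at h
        rw [hd]
        exact_mod_cast h
      have hcb0 : (0 : ℝ) ≤ ((nbhd E' i).card : ℝ) := Nat.cast_nonneg _
      have hsum : ∑ j ∈ nbhd E' i, ((deg E' j : ℝ)) ≤ ((nbhd E' i).card : ℝ) * d := by
        calc ∑ j ∈ nbhd E' i, ((deg E' j : ℝ)) ≤ ∑ _j ∈ nbhd E' i, d :=
          sum_le_sum (fun j _ => hdb j)
        _ = ((nbhd E' i).card : ℝ) * d := by rw [sum_const, nsmul_eq_mul]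
      rw [util, deg]
      nlinarith
    constructor
    · intro i _ E' _
      rw [hutil_complete i]
      exact hbound E' i
    · intro i _ j _ hij hnot
      exact (hnot (mem_cliqueOn.2 ⟨mem_univ i, mem_univ j, hij⟩)).elim
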